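/- The matrix identity E·D²·E⁻¹ = (A·B·C·D)⁵·(A·B)³·D⁻²·(A·B·C)⁻⁴ holds; in particular E·D²·E⁻¹ belongs to the subgroup generated by A, B, C, D. -/
import Mathlib


namespace GenusTwo

def A : Matrix (Fin 4) (Fin 4) ℤ := !![1,0,0,0; 0,1,0,0; 1,0,1,0; 0,0,0,1]
def B : Matrix (Fin 4) (Fin 4) ℤ := !![1,0,-1,1; 0,1,1,-1; 0,0,1,0; 0,0,0,1]
def C : Matrix (Fin 4) (Fin 4) ℤ := !![1,0,0,0; 0,1,0,0; 0,0,1,0; 0,1,0,1]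
def D : Matrix (Fin 4) (Fin 4) ℤ := !![1,0,0,0; 0,1,0,-1; 0,0,1,0; 0,0,0,1]
def E : Matrix (Fin 4) (Fin 4) ℤ := !![1,0,0,0; 0,1,0,0; 1,1,1,0; 1,1,0,1]

open Matrix in
/-- The subgroup of `GL(4,ℤ)` generated by the matrices `A`, `B`, `C`, `D`. -/
def ΓGL : Subgroup (GL (Fin 4) ℤ) :=
  Subgroup.closure {g | (g : Matrix (Fin 4) (Fin 4) ℤ) = A ∨
    (g : Matrix (Fin 4) (Fin 4) ℤ) = B ∨
    (g : Matrix (Fin 4) (Fin 4) ℤ) = C ∨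
    (g : Matrix (Fin 4) (Fin 4) ℤ) = D}

def Ai : Matrix (Fin 4) (Fin 4) ℤ := !![1,0,0,0; 0,1,0,0; -1,0,1,0; 0,0,0,1]
def Bi : Matrix (Fin 4) (Fin 4) ℤ := !![1,0,1,-1; 0,1,-1,1; 0,0,1,0; 0,0,0,1]
def Ci : Matrix (Fin 4) (Fin 4) ℤ := !![1,0,0,0; 0,1,0,0; 0,0,1,0; 0,-1,0,1]
def Di : Matrix (Fin 4) (Fin 4) ℤ := !![1,0,0,0; 0,1,0,1; 0,0,1,0; 0,0,0,1]
def Ei : Matrix (Fin 4) (Fin 4) ℤ := !![1,0,0,0; 0,1,0,0; -1,-1,1,0; -1,-1,0,1]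
def D2i : Matrix (Fin 4) (Fin 4) ℤ := !![1,0,0,0; 0,1,0,2; 0,0,1,0; 0,0,0,1]
def ABC4i : Matrix (Fin 4) (Fin 4) ℤ := !![1,0,0,0; 0,1,0,0; -2,-2,1,0; -2,-2,0,1]

def A' : GL (Fin 4) ℤ := ⟨A, Ai, by decide, by decide⟩
def B' : GL (Fin 4) ℤ := ⟨B, Bi, by decide, by decide⟩
def C' : GL (Fin 4) ℤ := ⟨C, Ci, by decide, by decide⟩
def D' : GL (Fin 4) ℤ := ⟨D, Di, by decide, by decide⟩

lemma hEinv : E⁻¹ = Ei := Matrix.inv_eq_right_inv (by decide)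
lemma hD2inv : (D ^ 2)⁻¹ = D2i := Matrix.inv_eq_right_inv (by decide)
lemma hABC4inv : ((A * B * C) ^ 4)⁻¹ = ABC4i := Matrix.inv_eq_right_inv (by decide)

lemma key : E * D ^ 2 * Ei = (A * B * C * D) ^ 5 * (A * B) ^ 3 * D2i * ABC4i := by decide

/-- `E·D²·E⁻¹ = (A·B·C·D)⁵·(A·B)³·D⁻²·(A·B·C)⁻⁴`; in particular `E·D²·E⁻¹` belongs to the
subgroup generated by `A`, `B`, `C`, `D`. -/
theorem ede_inv_identity :
    E * D ^ 2 * E⁻¹ = (A * B * C * D) ^ 5 * (A * B) ^ 3 * (D ^ 2)⁻¹ * ((A * B * C) ^ 4)⁻¹ ∧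
    ∃ g ∈ ΓGL, (g : Matrix (Fin 4) (Fin 4) ℤ) = E * D ^ 2 * E⁻¹ := by
  have h1 : E * D ^ 2 * E⁻¹
      = (A * B * C * D) ^ 5 * (A * B) ^ 3 * (D ^ 2)⁻¹ * ((A * B * C) ^ 4)⁻¹ := by
    rw [hEinv, hD2inv, hABC4inv]; exact key
  refine ⟨h1, ⟨(A' * B' * C' * D') ^ 5 * (A' * B') ^ 3 * (D' ^ 2)⁻¹ * ((A' * B' * C') ^ 4)⁻¹,
    ?_, ?_⟩⟩
  · have hA : A' ∈ ΓGL := Subgroup.subset_closure (Or.inl rfl)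
    have hB : B' ∈ ΓGL := Subgroup.subset_closure (Or.inr (Or.inl rfl))
    have hC : C' ∈ ΓGL := Subgroup.subset_closure (Or.inr (Or.inr (Or.inl rfl)))
    have hD : D' ∈ ΓGL := Subgroup.subset_closure (Or.inr (Or.inr (Or.inr rfl)))
    exact mul_mem (mul_mem (mul_mem (pow_mem (mul_mem (mul_mem (mul_mem hA hB) hC) hD) 5)
      (pow_mem (mul_mem hA hB) 3)) (inv_mem (pow_mem hD 2)))
      (inv_mem (pow_mem (mul_mem (mul_mem hA hB) hC) 4))
  · rw [h1]
    simp only [Units.val_mul, Units.val_pow_eq_pow_val, Matrix.coe_units_inv]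
    rfl

end GenusTwo
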